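/- For every integer n ≥ 2, min{‖k‖ + ‖n−k‖ : 1 ≤ k ≤ ⌊n/2⌋} = min{‖k‖ + ‖n−k‖ : 1 ≤ k ≤ kMax(n)}. -/
import Mathlib


/-- `HasCpx n k` means the positive integer `n` can be written using exactly `k` ones,
additions and multiplications. -/
inductive HasCpx : ℕ → ℕ → Prop
  | one : HasCpx 1 1
  | add {a b j k : ℕ} : HasCpx a j → HasCpx b k → HasCpx (a + b) (j + k)
  | mul {a b j k : ℕ} : HasCpx a j → HasCpx b k → HasCpx (a * b) (j + k)

/-- The integer complexity `‖n‖`: the least number of 1's needed to write `n` using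
only `+` and `*`.  By convention (`sInf ∅ = 0` in `ℕ`) we have `cpx 0 = 0`. -/
noncomputable def cpx (n : ℕ) : ℕ := sInf {k | HasCpx n k}

/-- The function `E`: `E k` is the largest integer of complexity `k` (OEIS A000792),
with `E 0 = 1`.  It satisfies `E 0 = E 1 = 1`, `E 2 = 2`, and for `j ≥ 1`:
`E (3j) = 3^j`, `E (3j+1) = 4·3^(j-1)`, `E (3j+2) = 2·3^j`. -/
def E : ℕ → ℕ
  | 0 => 1
  | 1 => 1
  | 2 => 2
  | 3 => 3
  | 4 => 4
  | (n + 5) => 3 * E (n + 2)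

/-- `te n` is the largest integer `t` with `0 ≤ t ≤ ⌊‖n-1‖/2⌋` such that
`E t + E (‖n-1‖ - t) ≥ n` (as a supremum in `ℕ`). -/
noncomputable def te (n : ℕ) : ℕ :=
  sSup {t : ℕ | t ≤ cpx (n - 1) / 2 ∧ n ≤ E t + E (cpx (n - 1) - t)}

/-- `kMax n = E (te n)`. -/
noncomputable def kMax (n : ℕ) : ℕ := E (te n)

lemma E_step (m : ℕ) (hm : 2 ≤ m) : E (m + 3) = 3 * E m := by
  obtain ⟨j, rfl⟩ : ∃ j, m = j + 2 := ⟨m - 2, by omega⟩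
  rfl

lemma E_pos (k : ℕ) : 1 ≤ E k := by
  induction k using Nat.strong_induction_on with
  | _ k ih =>
    match k, ih with
    | 0, _ => decide
    | 1, _ => decide
    | 2, _ => decide
    | 3, _ => decide
    | 4, _ => decide
    | (n+5), ih =>
      have := ih (n+2) (by omega)
      show 1 ≤ 3 * E (n+2); omega

lemma E_le_succ (k : ℕ) : E k ≤ E (k + 1) := by
  induction k using Nat.strong_induction_on with
  | _ k ih =>
    match k, ih with
    | 0, _ => decide
    | 1, _ => decide
    | 2, _ => decide
    | 3, _ => decide
    | 4, _ => decide
    | (n+5), ih =>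
      have h : E (n+2) ≤ E (n+3) := ih (n+2) (by omega)
      show 3 * E (n+2) ≤ 3 * E (n+3); omega

lemma E_mono : Monotone E := monotone_nat_of_le_succ E_le_succ

lemma E_mul_le : ∀ s a b, a + b ≤ s → 1 ≤ a → 1 ≤ b → E a * E b ≤ E (a + b) := by
  intro s
  induction s using Nat.strong_induction_on with
  | _ s ih =>
    intro a b hs ha hb
    rcases le_or_gt a 4 with h4 | h4
    · rcases le_or_gt b 4 with hb4 | hb4
      · interval_cases a <;> interval_cases b <;> decide
      · -- b ≥ 5
        have hb3 : 2 ≤ b - 3 := by omega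
        have e1 : E b = 3 * E (b - 3) := by
          have := E_step (b - 3) hb3; rw [show b - 3 + 3 = b by omega] at this; omega
        have e2 : E (a + b) = 3 * E (a + b - 3) := by
          have := E_step (a + b - 3) (by omega); rw [show a + b - 3 + 3 = a + b by omega] at this; omega
        have hrec := ih (s - 3) (by omega) a (b - 3) (by omega) ha (by omega)
        rw [show a + (b - 3) = a + b - 3 by omega] at hrec
        calc E a * E b = 3 * (E a * E (b - 3)) := by rw [e1]; ring
          _ ≤ 3 * E (a + b - 3) := by omega
          _ = E (a + b) := e2.symm
    · -- a ≥ 5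
      have ha3 : 2 ≤ a - 3 := by omega
      have e1 : E a = 3 * E (a - 3) := by
        have := E_step (a - 3) ha3; rw [show a - 3 + 3 = a by omega] at this; omega
      have e2 : E (a + b) = 3 * E (a + b - 3) := by
        have := E_step (a + b - 3) (by omega); rw [show a + b - 3 + 3 = a + b by omega] at this; omega
      have hrec := ih (s - 3) (by omega) (a - 3) b (by omega) (by omega) hb
      rw [show a - 3 + b = a + b - 3 by omega] at hrec
      calc E a * E b = 3 * (E (a - 3) * E b) := by rw [e1]; ring
        _ ≤ 3 * E (a + b - 3) := by omega
        _ = E (a + b) := e2.symm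

lemma E_mul_le' (a b : ℕ) (ha : 1 ≤ a) (hb : 1 ≤ b) : E a * E b ≤ E (a + b) :=
  E_mul_le (a + b) a b le_rfl ha hb

lemma E_add_le : ∀ s a b, a + b ≤ s → 1 ≤ a → 1 ≤ b → E a + E b ≤ E (a + b) := by
  intro s
  induction s using Nat.strong_induction_on with
  | _ s ih =>
    intro a b hs ha hb
    rcases le_or_gt a 4 with h4 | h4
    · rcases le_or_gt b 4 with hb4 | hb4
      · interval_cases a <;> interval_cases b <;> decide
      · have hb3 : 2 ≤ b - 3 := by omega
        have e1 : E b = 3 * E (b - 3) := by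
          have := E_step (b - 3) hb3; rw [show b - 3 + 3 = b by omega] at this; omega
        have e2 : E (a + b) = 3 * E (a + b - 3) := by
          have := E_step (a + b - 3) (by omega); rw [show a + b - 3 + 3 = a + b by omega] at this; omega
        have hrec := ih (s - 3) (by omega) a (b - 3) (by omega) ha (by omega)
        rw [show a + (b - 3) = a + b - 3 by omega] at hrec
        have hEa : 1 ≤ E a := E_pos a
        omega
    · have ha3 : 2 ≤ a - 3 := by omega
      have e1 : E a = 3 * E (a - 3) := by
        have := E_step (a - 3) ha3; rw [show a - 3 + 3 = a by omega] at this; omega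
      have e2 : E (a + b) = 3 * E (a + b - 3) := by
        have := E_step (a + b - 3) (by omega); rw [show a + b - 3 + 3 = a + b by omega] at this; omega
      have hrec := ih (s - 3) (by omega) (a - 3) b (by omega) (by omega) hb
      rw [show a - 3 + b = a + b - 3 by omega] at hrec
      have hEb : 1 ≤ E b := E_pos b
      omega

lemma E_three_mul (j : ℕ) (hj : 1 ≤ j) : E (3 * j) = 3 ^ j := by
  induction j with
  | zero => omega
  | succ j ih =>
    rcases Nat.eq_or_lt_of_le hj with h | h
    · simp [← h]; decide
    · have hj1 : 1 ≤ j := by omega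
      have := E_step (3 * j) (by omega)
      rw [show 3 * (j + 1) = 3 * j + 3 by ring, this, ih hj1]
      ring
lemma HasCpx.pos {n k : ℕ} (h : HasCpx n k) : 1 ≤ k ∧ 1 ≤ n := by
  induction h with
  | one => exact ⟨le_rfl, le_rfl⟩
  | add _ _ h1 h2 => exact ⟨by omega, by omega⟩
  | mul _ _ h1 h2 => exact ⟨by omega, Nat.one_le_iff_ne_zero.2 (Nat.mul_ne_zero (by omega) (by omega))⟩

lemma hasCpx_self : ∀ n, 1 ≤ n → HasCpx n n := by
  intro n
  induction n with
  | zero => omega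
  | succ n ih =>
    intro _
    rcases Nat.eq_or_lt_of_le (Nat.one_le_iff_ne_zero.2 (Nat.succ_ne_zero n)) with h | h
    · have hh : n + 1 = 1 := by omega
      rw [hh]; exact HasCpx.one
    · exact HasCpx.add (ih (by omega)) HasCpx.one

lemma cpx_mem (n : ℕ) (hn : 1 ≤ n) : HasCpx n (cpx n) :=
  Nat.sInf_mem ⟨n, hasCpx_self n hn⟩

lemma cpx_le {n k : ℕ} (h : HasCpx n k) : cpx n ≤ k := Nat.sInf_le h

lemma cpx_pos (n : ℕ) (hn : 1 ≤ n) : 1 ≤ cpx n := (cpx_mem n hn).pos.1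

lemma cpx_one : cpx 1 = 1 :=
  le_antisymm (cpx_le HasCpx.one) (cpx_pos 1 le_rfl)

lemma cpx_add_le (a b : ℕ) (ha : 1 ≤ a) (hb : 1 ≤ b) : cpx (a + b) ≤ cpx a + cpx b :=
  cpx_le ((cpx_mem a ha).add (cpx_mem b hb))

lemma cpx_mul_le (a b : ℕ) (ha : 1 ≤ a) (hb : 1 ≤ b) : cpx (a * b) ≤ cpx a + cpx b :=
  cpx_le ((cpx_mem a ha).mul (cpx_mem b hb))

lemma cpx_le_self (n : ℕ) (hn : 1 ≤ n) : cpx n ≤ n := cpx_le (hasCpx_self n hn)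

lemma cpx_le_log (m : ℕ) (hm : 2 ≤ m) : cpx m ≤ 3 * Nat.log 2 m := by
  induction m using Nat.strong_induction_on with
  | _ m ih =>
    rcases le_or_gt m 3 with h3 | h3
    · have h1 : Nat.log 2 m = 1 := by
        apply Nat.log_eq_of_pow_le_of_lt_pow <;> norm_num <;> omega
      have := cpx_le_self m (by omega)
      omega
    · have hq : 2 ≤ m / 2 := by omega
      have hlog : Nat.log 2 (m / 2) = Nat.log 2 m - 1 := Nat.log_div_base 2 m
      have hlogpos : 0 < Nat.log 2 m := Nat.log_pos (by norm_num) (by omega)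
      have hih := ih (m / 2) (by omega) hq
      have h2q : cpx (2 * (m / 2)) ≤ 2 + cpx (m / 2) := by
        have := cpx_mul_le 2 (m / 2) (by omega) (by omega)
        have h2 : cpx 2 ≤ 2 := cpx_le_self 2 (by omega)
        omega
      rcases Nat.even_or_odd m with he | ho
      · obtain ⟨c, hc⟩ := he
        have : 2 * (m / 2) = m := by omega
        rw [this] at h2q
        omega
      · have hm' : 2 * (m / 2) + 1 = m := by
          rcases ho with ⟨c, hc⟩; omega
        have h' := cpx_add_le (2 * (m / 2)) 1 (by omega) le_rfl
        rw [hm', cpx_one] at h'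
        omega



lemma le_E_of_hasCpx {n k : ℕ} (h : HasCpx n k) : n ≤ E k := by
  induction h with
  | one => exact le_rfl
  | add h1 h2 ih1 ih2 =>
    calc _ ≤ E _ + E _ := Nat.add_le_add ih1 ih2
      _ ≤ _ := E_add_le _ _ _ le_rfl h1.pos.1 h2.pos.1
  | mul h1 h2 ih1 ih2 =>
    calc _ ≤ E _ * E _ := Nat.mul_le_mul ih1 ih2
      _ ≤ _ := E_mul_le _ _ _ le_rfl h1.pos.1 h2.pos.1

lemma le_E_cpx (n : ℕ) (hn : 1 ≤ n) : n ≤ E (cpx n) := le_E_of_hasCpx (cpx_mem n hn)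

lemma zero_mem_teSet (n : ℕ) (hn : 2 ≤ n) :
    (0 : ℕ) ∈ {t : ℕ | t ≤ cpx (n - 1) / 2 ∧ n ≤ E t + E (cpx (n - 1) - t)} := by
  constructor
  · exact Nat.zero_le _
  · have h := le_E_cpx (n - 1) (by omega)
    simp only [Nat.sub_zero]
    have hE0 : E 0 = 1 := rfl
    omega

lemma te_mem (n : ℕ) (hn : 2 ≤ n) :
    te n ≤ cpx (n - 1) / 2 ∧ n ≤ E (te n) + E (cpx (n - 1) - te n) :=
  Nat.sSup_mem ⟨0, zero_mem_teSet n hn⟩ ⟨cpx (n-1)/2, fun t ht => ht.1⟩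

lemma le_te (n : ℕ) {t : ℕ} (ht : t ≤ cpx (n - 1) / 2)
    (ht2 : n ≤ E t + E (cpx (n - 1) - t)) : t ≤ te n :=
  le_csSup ⟨cpx (n-1)/2, fun u hu => hu.1⟩ ⟨ht, ht2⟩

lemma kMax_pos (n : ℕ) : 1 ≤ kMax n := E_pos _

lemma kMax_le (n : ℕ) (hn : 2 ≤ n) : kMax n ≤ n - 1 := by
  have hte := (te_mem n hn).1
  set c := cpx (n - 1) with hc
  rcases le_or_gt c 1 with h1 | h1
  · have h0 : te n = 0 := by omega
    rw [kMax, h0]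
    show 1 ≤ n - 1
    omega
  · have hm2 : 2 ≤ n - 1 := by
      by_contra h
      have h' : n - 1 = 1 := by omega
      rw [h', cpx_one] at hc
      omega
    set L := Nat.log 2 (n - 1) with hL
    have hLpos : 0 < L := Nat.log_pos (by norm_num) hm2
    have hcL : c ≤ 3 * L := cpx_le_log (n - 1) hm2
    have h2L : 2 ^ L ≤ n - 1 := Nat.pow_log_le_self 2 (by omega)
    have hsq : E (c / 2) * E (c / 2) ≤ E c := by
      calc E (c / 2) * E (c / 2) ≤ E (c / 2) * E (c - c / 2) :=
            Nat.mul_le_mul_left _ (E_mono (by omega))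
        _ ≤ E (c / 2 + (c - c / 2)) := E_mul_le' _ _ (by omega) (by omega)
        _ = E c := by congr 1; omega
    have hEc : E c ≤ 3 ^ L := by
      calc E c ≤ E (3 * L) := E_mono hcL
        _ = 3 ^ L := E_three_mul L hLpos
    have h3L : 3 ^ L ≤ 2 ^ L * 2 ^ L := by
      calc 3 ^ L ≤ 4 ^ L := Nat.pow_le_pow_left (by norm_num) L
        _ = 2 ^ L * 2 ^ L := by rw [← Nat.mul_pow]
    have hfin : E (c / 2) * E (c / 2) ≤ (n - 1) * (n - 1) :=
      hsq.trans (hEc.trans (h3L.trans (Nat.mul_le_mul h2L h2L)))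
    have hle : E (c / 2) ≤ n - 1 := by
      by_contra h
      push_neg at h
      exact absurd hfin (not_le.mpr (Nat.mul_lt_mul'' h h))
    calc kMax n = E (te n) := rfl
      _ ≤ E (c / 2) := E_mono hte
      _ ≤ n - 1 := hle

lemma key_lemma (n k : ℕ) (hn : 2 ≤ n) (hk1 : 1 ≤ k) (hk2 : k ≤ n / 2)
    (hval : cpx k + cpx (n - k) ≤ cpx (n - 1)) : k ≤ kMax n := by
  set a := cpx k with ha
  set b := cpx (n - k) with hb
  set c := cpx (n - 1) with hc
  have hnk : 1 ≤ n - k := by omega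
  have hka : k ≤ E a := le_E_cpx k hk1
  have hkb : n - k ≤ E b := le_E_cpx (n - k) hnk
  have hapos : 1 ≤ a := cpx_pos k hk1
  have hbpos : 1 ≤ b := cpx_pos (n - k) hnk
  rcases le_total a b with hab | hab
  · have htc : a ≤ c / 2 := by omega
    have hEt : n ≤ E a + E (c - a) := by
      have h1 : E b ≤ E (c - a) := E_mono (by omega)
      omega
    calc k ≤ E a := hka
      _ ≤ E (te n) := E_mono (le_te n htc hEt)
      _ = kMax n := rfl
  · have htc : b ≤ c / 2 := by omega
    have hEt : n ≤ E b + E (c - b) := by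
      have h1 : E a ≤ E (c - b) := E_mono (by omega)
      omega
    have hkEb : k ≤ E b := by omega
    calc k ≤ E b := hkEb
      _ ≤ E (te n) := E_mono (le_te n htc hEt)
      _ = kMax n := rfl


/-- For `n ≥ 2`, the minimum of `‖k‖ + ‖n-k‖` over `1 ≤ k ≤ ⌊n/2⌋` equals the
minimum over `1 ≤ k ≤ kMax n`. -/
theorem min_sum_eq_min_up_to_kMax (n : ℕ) (hn : 2 ≤ n) :
    sInf {s : ℕ | ∃ k : ℕ, 1 ≤ k ∧ k ≤ n / 2 ∧ s = cpx k + cpx (n - k)} =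
    sInf {s : ℕ | ∃ k : ℕ, 1 ≤ k ∧ k ≤ kMax n ∧ s = cpx k + cpx (n - k)} := by
  set A := {s : ℕ | ∃ k : ℕ, 1 ≤ k ∧ k ≤ n / 2 ∧ s = cpx k + cpx (n - k)} with hA
  set B := {s : ℕ | ∃ k : ℕ, 1 ≤ k ∧ k ≤ kMax n ∧ s = cpx k + cpx (n - k)} with hB
  have hAne : A.Nonempty := ⟨cpx 1 + cpx (n - 1), 1, le_rfl, by omega, rfl⟩
  have hBne : B.Nonempty := ⟨cpx 1 + cpx (n - 1), 1, le_rfl, kMax_pos n, rfl⟩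
  have hBsubA : B ⊆ A := by
    rintro s ⟨k, hk1, hk2, rfl⟩
    have hkn : k ≤ n - 1 := hk2.trans (kMax_le n hn)
    rcases le_or_gt k (n / 2) with h | h
    · exact ⟨k, hk1, h, rfl⟩
    · refine ⟨n - k, by omega, by omega, ?_⟩
      rw [show n - (n - k) = k by omega, Nat.add_comm]
  apply le_antisymm
  · exact Nat.sInf_le (hBsubA (Nat.sInf_mem hBne))
  · obtain ⟨k, hk1, hk2, hmem⟩ := Nat.sInf_mem hAne
    rcases le_or_gt (cpx k + cpx (n - k)) (cpx (n - 1)) with h | h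
    · have := key_lemma n k hn hk1 hk2 h
      rw [hmem]
      exact Nat.sInf_le ⟨k, hk1, this, rfl⟩
    · have h1B : cpx 1 + cpx (n - 1) ∈ B := ⟨1, le_rfl, kMax_pos n, rfl⟩
      have := Nat.sInf_le h1B
      rw [hmem, cpx_one] at *
      omega
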